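/- (Two-user scalar Gaussian MAC–BC capacity duality.) Fix channel gains h₁ ≥ h₂ > 0 and total power P > 0. Then C_BC(P) = ⋃ { C_MAC(P₁, P₂) : P₁, P₂ ≥ 0, P₁ + P₂ = P }, where for P₁, P₂ ≥ 0, C_MAC(P₁, P₂) = { (r₁, r₂) : r₁ ≥ 0, r₂ ≥ 0, r₁ ≤ logb 2 (1 + h₁^2·P₁), r₂ ≤ logb 2 (1 + h₂^2·P₂), r₁ + r₂ ≤ logb 2 (1 + h₁^2·P₁ + h₂^2·P₂) } and C_BC(P) = { (r₁, r₂) : r₁ ≥ 0, r₂ ≥ 0, and there exists α ∈ [0,1] with r₁ ≤ logb 2 (1 + h₁^2·α·P) and r₂ ≤ logb 2 (1 + h₂^2·(1−α)·P/(1 + h₂^2·α·P)) }. -/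

import Mathlib

open Real

/-- Information theoretic capacity region (pentagon) of the two-user scalar Gaussian MAC
with amplitude gains `h₁, h₂`, unit-variance noise and transmit powers `P₁, P₂`. -/
def macCap (h₁ h₂ P₁ P₂ : ℝ) : Set (ℝ × ℝ) :=
  {r : ℝ × ℝ | 0 ≤ r.1 ∧ 0 ≤ r.2 ∧
    r.1 ≤ Real.logb 2 (1 + h₁ ^ 2 * P₁) ∧
    r.2 ≤ Real.logb 2 (1 + h₂ ^ 2 * P₂) ∧
    r.1 + r.2 ≤ Real.logb 2 (1 + h₁ ^ 2 * P₁ + h₂ ^ 2 * P₂)}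

/-- Information theoretic capacity region of the two-user scalar Gaussian broadcast
channel with gains `h₁ ≥ h₂`, unit-variance noise and total power `P`, achieved by
superposition coding with power split `α` to the stronger user. -/
def bcCap (h₁ h₂ P : ℝ) : Set (ℝ × ℝ) :=
  {r : ℝ × ℝ | 0 ≤ r.1 ∧ 0 ≤ r.2 ∧
    ∃ α ∈ Set.Icc (0 : ℝ) 1,
      r.1 ≤ Real.logb 2 (1 + h₁ ^ 2 * α * P) ∧
      r.2 ≤ Real.logb 2 (1 + h₂ ^ 2 * (1 - α) * P / (1 + h₂ ^ 2 * α * P))}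

private lemma key_ineq {t s a b y : ℝ} (ht0 : 0 < t) (ht1 : t ≤ 1)
    (hs0 : 0 ≤ s) (hb0 : 0 ≤ b) (ha0 : 0 ≤ a) (hy0 : 0 ≤ y)
    (hyb : y ≤ 1 + b) (hxy : (1 + s) * y ≤ 1 + a + b) :
    y * (1 + t * s) ≤ 1 + t * a + b := by
  have hts : (0:ℝ) ≤ t * s := mul_nonneg ht0.le hs0
  rcases le_total (s * (1 + b)) a with hc | hc
  · nlinarith [mul_le_mul_of_nonneg_right hyb (by linarith : (0:ℝ) ≤ 1 + t * s),
      mul_le_mul_of_nonneg_left hc ht0.le]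
  · have h1s : (0:ℝ) < 1 + s := by linarith
    nlinarith [mul_le_mul_of_nonneg_right hxy (by linarith : (0:ℝ) ≤ 1 + t * s),
      mul_nonneg (by linarith : (0:ℝ) ≤ 1 - t)
        (by linarith : (0:ℝ) ≤ s * (1 + b) - a),
      mul_pos h1s (by linarith : (0:ℝ) < 1 + t * s)]

set_option maxHeartbeats 1000000

/-- Two-user scalar Gaussian MAC–BC capacity duality. -/
theorem mac_bc_capacity_duality
    (h₁ h₂ P : ℝ) (hh₂ : 0 < h₂) (hh : h₂ ≤ h₁) (hP : 0 < P) :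
    bcCap h₁ h₂ P =
      ⋃ (P₁ : ℝ) (P₂ : ℝ) (_ : 0 ≤ P₁) (_ : 0 ≤ P₂) (_ : P₁ + P₂ = P),
        macCap h₁ h₂ P₁ P₂ := by
  have hh₁ : 0 < h₁ := lt_of_lt_of_le hh₂ hh
  have hb : (1:ℝ) < 2 := one_lt_two
  ext r
  simp only [macCap, bcCap, Set.mem_setOf_eq, Set.mem_iUnion, exists_prop,
    Set.mem_Icc]
  constructor
  · rintro ⟨hr₁, hr₂, α, ⟨hα0, hα1⟩, h1, h2⟩
    have hα1' : (0:ℝ) ≤ 1 - α := by linarith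
    have hD0 : (0:ℝ) < 1 + h₂ ^ 2 * α * P := by positivity
    refine ⟨α * P * (1 + h₂ ^ 2 * P) / (1 + h₂ ^ 2 * α * P),
      (1 - α) * P / (1 + h₂ ^ 2 * α * P), by positivity,
      by positivity, ?_, hr₁, hr₂, ?_, ?_, ?_⟩
    · field_simp
      ring
    · refine h1.trans (logb_le_logb_of_le hb (by positivity) ?_)
      have h2' : α * P ≤ α * P * (1 + h₂ ^ 2 * P) / (1 + h₂ ^ 2 * α * P) := by
        rw [le_div_iff₀ hD0]
        nlinarith [mul_nonneg (mul_nonneg (mul_nonneg (sq_nonneg h₂) hP.le)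
          (mul_nonneg hα0 hP.le)) hα1']
      nlinarith [sq_nonneg h₁]
    · refine h2.trans (le_of_eq ?_)
      congr 1
      field_simp
    · have key : (1 + h₁ ^ 2 * α * P) *
          (1 + h₂ ^ 2 * (1 - α) * P / (1 + h₂ ^ 2 * α * P)) =
          1 + h₁ ^ 2 * (α * P * (1 + h₂ ^ 2 * P) / (1 + h₂ ^ 2 * α * P)) +
          h₂ ^ 2 * ((1 - α) * P / (1 + h₂ ^ 2 * α * P)) := by
        field_simp
        ring
      have hX : (0:ℝ) < 1 + h₁ ^ 2 * α * P := by positivity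
      have hY : (0:ℝ) < 1 + h₂ ^ 2 * (1 - α) * P / (1 + h₂ ^ 2 * α * P) := by
        have : 0 ≤ h₂ ^ 2 * (1 - α) * P / (1 + h₂ ^ 2 * α * P) := by positivity
        linarith
      calc r.1 + r.2 ≤ logb 2 (1 + h₁ ^ 2 * α * P) +
            logb 2 (1 + h₂ ^ 2 * (1 - α) * P / (1 + h₂ ^ 2 * α * P)) :=
            add_le_add h1 h2
        _ = logb 2 ((1 + h₁ ^ 2 * α * P) *
            (1 + h₂ ^ 2 * (1 - α) * P / (1 + h₂ ^ 2 * α * P))) :=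
            (Real.logb_mul hX.ne' hY.ne').symm
        _ = _ := by rw [key]
  · rintro ⟨P₁, P₂, hP₁, hP₂, hsum, hr₁, hr₂, h1, h2, h12⟩
    set a := h₁ ^ 2 * P₁ with ha
    set b := h₂ ^ 2 * P₂ with hbdef
    have ha0 : 0 ≤ a := by positivity
    have hb0 : 0 ≤ b := by positivity
    set x := (2:ℝ) ^ r.1 with hxdef
    set y := (2:ℝ) ^ r.2 with hydef
    have hx1 : (1:ℝ) ≤ x := Real.one_le_rpow one_le_two hr₁
    have hy1 : (1:ℝ) ≤ y := Real.one_le_rpow one_le_two hr₂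
    set s := x - 1 with hsdef
    have hs0 : 0 ≤ s := by simp [hsdef]; linarith
    have hxa : x ≤ 1 + a := by
      rw [hxdef]
      exact (Real.le_logb_iff_rpow_le hb (by positivity)).1 h1
    have hyb : y ≤ 1 + b := by
      rw [hydef]
      exact (Real.le_logb_iff_rpow_le hb (by positivity)).1 h2
    have hxy : x * y ≤ 1 + a + b := by
      rw [hxdef, hydef, ← Real.rpow_add two_pos]
      exact (Real.le_logb_iff_rpow_le hb (by positivity)).1 h12
    have hsa : s ≤ a := by simp [hsdef]; linarith
    set t := h₂ ^ 2 / h₁ ^ 2 with htdef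
    have ht0 : 0 < t := by positivity
    have ht1 : t ≤ 1 := by
      rw [htdef, div_le_one (by positivity)]
      nlinarith
    set α := s / (h₁ ^ 2 * P) with hαdef
    have hα0 : 0 ≤ α := by positivity
    have hα1 : α ≤ 1 := by
      rw [hαdef, div_le_one (by positivity)]
      have : a ≤ h₁ ^ 2 * P := by
        rw [ha]; nlinarith
      linarith
    have hαP1 : h₁ ^ 2 * α * P = s := by
      rw [hαdef]; field_simp
    have hαP2 : h₂ ^ 2 * α * P = t * s := by
      rw [hαdef, htdef]; field_simp
    have hP2eq : h₂ ^ 2 * P = t * a + b := by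
      rw [htdef, ha, hbdef, ← hsum]; field_simp
    clear_value a b x y s t α
    -- key inequality
    have hxy' : (1 + s) * y ≤ 1 + a + b := by
      have : (1 + s) = x := by rw [hsdef]; ring
      rw [this]; exact hxy
    have key : y * (1 + t * s) ≤ 1 + t * a + b :=
      key_ineq ht0 ht1 hs0 hb0 ha0 (by linarith) hyb hxy' 
    refine ⟨hr₁, hr₂, α, ⟨hα0, hα1⟩, ?_, ?_⟩
    · have : 1 + h₁ ^ 2 * α * P = x := by rw [hαP1]; simp [hsdef]
      rw [this, hxdef, Real.logb_rpow two_pos (by norm_num)]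
    · have hE0 : (0:ℝ) < 1 + h₂ ^ 2 * α * P := by
        rw [hαP2]; nlinarith [mul_nonneg ht0.le hs0]
      have hTeq : 1 + h₂ ^ 2 * (1 - α) * P / (1 + h₂ ^ 2 * α * P) =
          (1 + h₂ ^ 2 * P) / (1 + h₂ ^ 2 * α * P) := by
        field_simp
        ring
      rw [hTeq, Real.le_logb_iff_rpow_le hb (by positivity), le_div_iff₀ hE0,
        ← hydef, hαP2, hP2eq]
      linarith [key]
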